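/- arXiv:1910.04472 — 4 statements merged into one kernel-verified Lean document; each statement's English description precedes it below -/
import Mathlib

section
/- For any prime power q, integers 1 ≤ k < n, and matrices A, B ∈ F_q^{k×(n−k)}, the subspace distance between the row spaces of the k×n matrices (I_k | A) and (I_k | B) equals 2·rank(A − B), where I_k is the k×k identity matrix. -/
/-!
The row space of `(I_k | C)` is, up to the identification `F^n ≅ F^k × F^(n-k)`, the graph of
`x ↦ x C`. Two graphs of maps `f, g` on a `k`-dimensional space have dimension `k` each and meet in
a copy of `ker (f - g)`, so by the modular law and rank–nullity
`dim (U + W) - dim (U ∩ W) = 2k - 2 dim ker (f - g) = 2 rank (f - g)`.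
-/

open Module

/-- The row space of a matrix: the subspace spanned by its rows. -/
noncomputable def rowSpace {F : Type*} [Field F] {k n : ℕ} (M : Matrix (Fin k) (Fin n) F) :
    Submodule F (Fin n → F) := LinearMap.range M.vecMulLinear

/-- The subspace distance `d_S(U, W) = dim(U + W) − dim(U ∩ W)`. -/
noncomputable def subspaceDist {F : Type*} [Field F] {n : ℕ}
    (U W : Submodule F (Fin n → F)) : ℕ :=
  finrank F ↥(U ⊔ W) - finrank F ↥(U ⊓ W)

/-- Horizontal concatenation `(A | B)` of two matrices with the same number of rows. -/
def hcat {F : Type*} {k n1 n2 : ℕ} (A : Matrix (Fin k) (Fin n1) F)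
    (B : Matrix (Fin k) (Fin n2) F) : Matrix (Fin k) (Fin (n1 + n2)) F :=
  Matrix.of fun i => Fin.append (A i) (B i)

namespace LinearMap

variable {K V W : Type*} [DivisionRing K] [AddCommGroup V] [Module K V] [AddCommGroup W]
  [Module K W]

theorem finrank_graph (f : V →ₗ[K] W) : finrank K f.graph = finrank K V := by
  rw [graph_eq_range_prod]
  exact finrank_range_of_inj fun x y h => congrArg Prod.fst h

theorem graph_inf_graph (f g : V →ₗ[K] W) :
    f.graph ⊓ g.graph = range (id.prod f ∘ₗ (ker (f - g)).subtype) := by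
  ext ⟨x, y⟩
  simp only [Submodule.mem_inf, mem_graph_iff, mem_range, coe_comp, Function.comp_apply,
    Submodule.coe_subtype, prod_apply, id_coe, Subtype.exists, mem_ker, sub_apply, sub_eq_zero]
  constructor
  · rintro ⟨rfl, hg⟩
    exact ⟨x, hg, rfl⟩
  · rintro ⟨a, ha, ⟨⟩⟩
    exact ⟨rfl, ha⟩

theorem finrank_graph_inf_graph (f g : V →ₗ[K] W) :
    finrank K ↥(f.graph ⊓ g.graph) = finrank K (ker (f - g)) := by
  rw [graph_inf_graph]
  exact finrank_range_of_inj fun x y h => Subtype.ext (congrArg Prod.fst h)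

theorem finrank_graph_sup_sub_finrank_graph_inf [FiniteDimensional K V] (f g : V →ₗ[K] W) :
    finrank K ↥(f.graph ⊔ g.graph) - finrank K ↥(f.graph ⊓ g.graph) =
      2 * finrank K (range (f - g)) := by
  have : FiniteDimensional K f.graph := by rw [graph_eq_range_prod]; infer_instance
  have : FiniteDimensional K g.graph := by rw [graph_eq_range_prod]; infer_instance
  have modular := Submodule.finrank_sup_add_finrank_inf_eq f.graph g.graph
  have rank_nullity := finrank_range_add_finrank_ker (f - g)
  rw [finrank_graph, finrank_graph, finrank_graph_inf_graph] at modular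
  rw [finrank_graph_inf_graph]
  omega

end LinearMap

theorem finrank_map_sup_sub_finrank_map_inf {R M N : Type*} [Semiring R] [AddCommMonoid M]
    [Module R M] [AddCommMonoid N] [Module R N] (e : M ≃ₗ[R] N) (U U' : Submodule R M) :
    finrank R ↥(U.map (e : M →ₗ[R] N) ⊔ U'.map (e : M →ₗ[R] N)) -
        finrank R ↥(U.map (e : M →ₗ[R] N) ⊓ U'.map (e : M →ₗ[R] N)) =
      finrank R ↥(U ⊔ U') - finrank R ↥(U ⊓ U') := by
  rw [← Submodule.map_sup, ← Submodule.map_inf _ e.injective, e.finrank_map_eq, e.finrank_map_eq]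

def Fin.appendLinearEquiv (R M : Type*) [Semiring R] [AddCommMonoid M] [Module R M]
    (k m : ℕ) : ((Fin k → M) × (Fin m → M)) ≃ₗ[R] (Fin (k + m) → M) where
  __ := Fin.appendEquiv k m
  map_add' x y := by ext j; refine Fin.addCases (fun l => ?_) (fun r => ?_) j <;> simp
  map_smul' c x := by ext j; refine Fin.addCases (fun l => ?_) (fun r => ?_) j <;> simp

namespace Matrix

theorem vecMul_hcat {α : Type*} [NonUnitalNonAssocSemiring α] {k m p : ℕ}
    (C : Matrix (Fin k) (Fin m) α) (D : Matrix (Fin k) (Fin p) α) (x : Fin k → α) :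
    x ᵥ* hcat C D = Fin.append (x ᵥ* C) (x ᵥ* D) := by
  ext j
  refine Fin.addCases (fun l => ?_) (fun r => ?_) j <;> simp [vecMul, dotProduct, hcat]

theorem vecMulLinear_sub {R m n : Type*} [CommRing R] [Fintype m] (C D : Matrix m n R) :
    (C - D).vecMulLinear = C.vecMulLinear - D.vecMulLinear :=
  LinearMap.ext fun x => vecMul_sub C D x

theorem rank_eq_finrank_range_vecMulLinear {F m n : Type*} [Field F] [Fintype m] [Fintype n]
    (C : Matrix m n F) : C.rank = finrank F (LinearMap.range C.vecMulLinear) := by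
  rw [← rank_transpose, rank, mulVecLin_transpose]

end Matrix

section Lifting

open Matrix

variable {F : Type*} [Field F] {k m n : ℕ}

theorem rowSpace_hcat_one_submatrix_cast (h : n = k + m) (C : Matrix (Fin k) (Fin m) F) :
    rowSpace ((hcat 1 C).submatrix id (Fin.cast h)) =
      C.vecMulLinear.graph.map
        (Fin.appendLinearEquiv F F k m ≪≫ₗ LinearEquiv.funCongrLeft F F (finCongr h) :
          _ →ₗ[F] _) := by
  rw [LinearMap.graph_eq_range_prod, ← LinearMap.range_comp, rowSpace]
  congr 1
  refine LinearMap.ext fun x => funext fun j => ?_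
  show (x ᵥ* hcat 1 C) (Fin.cast h j) = Fin.append x (x ᵥ* C) (Fin.cast h j)
  rw [vecMul_hcat, vecMul_one]

theorem subspaceDist_rowSpace_hcat_one_submatrix_cast (h : n = k + m)
    (A B : Matrix (Fin k) (Fin m) F) :
    subspaceDist (rowSpace ((hcat 1 A).submatrix id (Fin.cast h)))
      (rowSpace ((hcat 1 B).submatrix id (Fin.cast h))) = 2 * (A - B).rank := by
  rw [subspaceDist, rowSpace_hcat_one_submatrix_cast, rowSpace_hcat_one_submatrix_cast,
    finrank_map_sup_sub_finrank_map_inf, LinearMap.finrank_graph_sup_sub_finrank_graph_inf,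
    rank_eq_finrank_range_vecMulLinear, vecMulLinear_sub]

end Lifting

theorem subspaceDist_lifted_eq_two_mul_rank (k n : ℕ) (hkn : k < n)
    (F : Type*) [Field F]
    (A B : Matrix (Fin k) (Fin (n - k)) F) :
    subspaceDist
      (rowSpace ((hcat (1 : Matrix (Fin k) (Fin k) F) A).submatrix id
        (Fin.cast (by omega : n = k + (n - k)))))
      (rowSpace ((hcat (1 : Matrix (Fin k) (Fin k) F) B).submatrix id
        (Fin.cast (by omega : n = k + (n - k))))) = 2 * (A - B).rank :=
  subspaceDist_rowSpace_hcat_one_submatrix_cast _ A B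
end

section
/- Let q be a prime power, and let U be an SC-representation of an (n1, N1, d1, k)_q constant dimension code (a set of N1 full-rank k×n1 matrices over F_q with pairwise distinct row spaces, whose row spaces have pairwise subspace distance at least d1). Let Q ⊆ F_q^{k×n2} be a set of N2 matrices such that rank(A − B) ≥ d2 for all distinct A, B ∈ Q. Then W1 = { rowspace(U | Q) : U ∈ U, Q ∈ Q } is an (n1 + n2, N1·N2, min{d1, 2·d2}, k)_q constant dimension code; in particular the N1·N2 row spaces rowspace(U | Q) are pairwise distinct and have pairwise subspace distance at least min{d1, 2·d2}. -/
/-!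
Projecting `(U | Q)` onto its first `n1` coordinates recovers `U`, and since `U` has full rank
this projection is injective on `rowspace(U | Q)`. Hence every `rowspace(U | Q)` has dimension
`k`, and for `U1 ≠ U2` the projection, which preserves both dimensions and can only shrink the sum,
gives `d_S(rowspace(U1 | Q1), rowspace(U2 | Q2)) ≥ d_S(rowspace U1, rowspace U2) ≥ d1`.
For `U1 = U2 = U`, a common vector `v (U | Q1) = w (U | Q2)` forces `v = w` and `v (Q1 - Q2) = 0`,
so the intersection has dimension at most `k - rank (Q1 - Q2)` and the distance is at least
`2 rank (Q1 - Q2) ≥ 2 d2`.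
-/

open Module

/-- `S` is an SC-representation of an `(n, N, d, k)_q` constant dimension code: a set of `N`
full-rank `k×n` matrices whose row spaces are pairwise distinct and have pairwise subspace
distance at least `d`. -/
def IsSCRepOfCDC {F : Type*} [Field F] {k n : ℕ}
    (S : Finset (Matrix (Fin k) (Fin n) F)) (N d : ℕ) : Prop :=
  S.card = N ∧ (∀ M ∈ S, M.rank = k) ∧
  (∀ M1 ∈ S, ∀ M2 ∈ S, M1 ≠ M2 → rowSpace M1 ≠ rowSpace M2) ∧
  (∀ M1 ∈ S, ∀ M2 ∈ S, M1 ≠ M2 → d ≤ subspaceDist (rowSpace M1) (rowSpace M2))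

section RowSpace

open Matrix

variable {F : Type*} [Field F] {m : Type*} [Fintype m] {k n n1 n2 : ℕ}

theorem finrank_rowSpace (M : Matrix (Fin k) (Fin n) F) :
    finrank F (rowSpace M) = M.rank := by
  rw [rowSpace, range_vecMulLinear, rank_eq_finrank_span_row]

theorem Matrix.vecMul_injective_of_rank_eq {M : Matrix m (Fin n) F}
    (hM : M.rank = Fintype.card m) : Function.Injective M.vecMul :=
  vecMul_injective_iff.mpr <| linearIndependent_iff_card_eq_finrank_span.mpr <| by
    rw [← hM, rank_eq_finrank_span_row, Set.finrank]

theorem Matrix.eq_zero_of_rank_eq_zero {M : Matrix m (Fin n) F} (hM : M.rank = 0) : M = 0 := by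
  rw [rank_eq_finrank_span_row, Submodule.finrank_eq_zero, Submodule.span_eq_bot] at hM
  ext i j
  exact congrFun (hM (M.row i) ⟨i, rfl⟩) j

theorem Matrix.finrank_ker_vecMulLinear_add_rank (M : Matrix (Fin k) (Fin n) F) :
    finrank F (LinearMap.ker M.vecMulLinear) + M.rank = k := by
  have := LinearMap.finrank_range_add_finrank_ker M.vecMulLinear
  rw [← rowSpace, finrank_rowSpace, Module.finrank_fin_fun] at this
  omega

@[simp]
theorem vecMul_hcat_comp_castAdd (v : Fin k → F) (A : Matrix (Fin k) (Fin n1) F)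
    (B : Matrix (Fin k) (Fin n2) F) : (v ᵥ* hcat A B) ∘ Fin.castAdd n2 = v ᵥ* A := by
  funext i
  simp [hcat, vecMul, dotProduct]

@[simp]
theorem vecMul_hcat_comp_natAdd (v : Fin k → F) (A : Matrix (Fin k) (Fin n1) F)
    (B : Matrix (Fin k) (Fin n2) F) : (v ᵥ* hcat A B) ∘ Fin.natAdd n1 = v ᵥ* B := by
  funext i
  simp [hcat, vecMul, dotProduct]

theorem rowSpace_hcat_map_castAdd (A : Matrix (Fin k) (Fin n1) F)
    (B : Matrix (Fin k) (Fin n2) F) :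
    (rowSpace (hcat A B)).map (LinearMap.funLeft F F (Fin.castAdd n2)) = rowSpace A := by
  rw [rowSpace, rowSpace, ← LinearMap.range_comp]
  congr 1
  exact LinearMap.ext fun v => vecMul_hcat_comp_castAdd v A B

theorem finrank_rowSpace_hcat {A : Matrix (Fin k) (Fin n1) F} (hA : A.rank = k)
    (B : Matrix (Fin k) (Fin n2) F) : finrank F (rowSpace (hcat A B)) = k := by
  have hinj : Function.Injective (hcat A B).vecMulLinear := fun v w hvw => by
    have := congrArg (· ∘ Fin.castAdd n2) hvw
    simp only [vecMulLinear_apply, vecMul_hcat_comp_castAdd] at this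
    exact vecMul_injective_of_rank_eq (by simpa using hA) this
  rw [rowSpace, LinearMap.finrank_range_of_inj hinj, Module.finrank_fin_fun]

end RowSpace

section SubspaceDist

variable {F : Type*} [Field F] {n m : ℕ}

@[simp]
theorem subspaceDist_self (W : Submodule F (Fin n → F)) : subspaceDist W W = 0 := by
  rw [subspaceDist, sup_idem, inf_idem, Nat.sub_self]

theorem subspaceDist_map_le (f : (Fin n → F) →ₗ[F] (Fin m → F)) {U W : Submodule F (Fin n → F)}
    (hU : finrank F (U.map f) = finrank F U) (hW : finrank F (W.map f) = finrank F W) :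
    subspaceDist (U.map f) (W.map f) ≤ subspaceDist U W := by
  have hsup := Submodule.finrank_map_le f (U ⊔ W)
  rw [Submodule.map_sup] at hsup
  have := Submodule.finrank_sup_add_finrank_inf_eq U W
  have := Submodule.finrank_sup_add_finrank_inf_eq (U.map f) (W.map f)
  unfold subspaceDist
  omega

end SubspaceDist

section Linkage

open Matrix

variable {F : Type*} [Field F] {k n1 n2 : ℕ}

theorem subspaceDist_rowSpace_le_subspaceDist_rowSpace_hcat {U1 U2 : Matrix (Fin k) (Fin n1) F}
    (hU1 : U1.rank = k) (hU2 : U2.rank = k) (Q1 Q2 : Matrix (Fin k) (Fin n2) F) :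
    subspaceDist (rowSpace U1) (rowSpace U2) ≤
      subspaceDist (rowSpace (hcat U1 Q1)) (rowSpace (hcat U2 Q2)) := by
  have h := subspaceDist_map_le (LinearMap.funLeft F F (Fin.castAdd n2))
    (U := rowSpace (hcat U1 Q1)) (W := rowSpace (hcat U2 Q2))
    (by rw [rowSpace_hcat_map_castAdd, finrank_rowSpace, finrank_rowSpace_hcat hU1, hU1])
    (by rw [rowSpace_hcat_map_castAdd, finrank_rowSpace, finrank_rowSpace_hcat hU2, hU2])
  rwa [rowSpace_hcat_map_castAdd, rowSpace_hcat_map_castAdd] at h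

theorem inf_rowSpace_hcat_le_map_ker {U : Matrix (Fin k) (Fin n1) F} (hU : U.rank = k)
    (Q1 Q2 : Matrix (Fin k) (Fin n2) F) :
    rowSpace (hcat U Q1) ⊓ rowSpace (hcat U Q2) ≤
      (LinearMap.ker (Q1 - Q2).vecMulLinear).map (hcat U Q1).vecMulLinear := by
  rintro x ⟨⟨v, rfl⟩, ⟨w, hw⟩⟩
  simp only [vecMulLinear_apply] at hw
  have hwU := congrArg (· ∘ Fin.castAdd n2) hw
  have hwQ := congrArg (· ∘ Fin.natAdd n1) hw
  simp only [vecMul_hcat_comp_castAdd, vecMul_hcat_comp_natAdd] at hwU hwQ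
  obtain rfl := vecMul_injective_of_rank_eq (by simpa using hU) hwU
  exact ⟨w, by simp [hwQ], rfl⟩

theorem two_mul_rank_sub_le_subspaceDist_rowSpace_hcat {U : Matrix (Fin k) (Fin n1) F}
    (hU : U.rank = k) (Q1 Q2 : Matrix (Fin k) (Fin n2) F) :
    2 * (Q1 - Q2).rank ≤ subspaceDist (rowSpace (hcat U Q1)) (rowSpace (hcat U Q2)) := by
  have hinf := (Submodule.finrank_mono (inf_rowSpace_hcat_le_map_ker hU Q1 Q2)).trans
    (Submodule.finrank_map_le _ _)
  have := Submodule.finrank_sup_add_finrank_inf_eq (rowSpace (hcat U Q1)) (rowSpace (hcat U Q2))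
  rw [finrank_rowSpace_hcat hU, finrank_rowSpace_hcat hU] at this
  have := (Q1 - Q2).finrank_ker_vecMulLinear_add_rank
  unfold subspaceDist
  omega

theorem rowSpace_hcat_ne_and_min_le_subspaceDist {d1 d2 : ℕ} {U1 U2 : Matrix (Fin k) (Fin n1) F}
    {Q1 Q2 : Matrix (Fin k) (Fin n2) F} (hU1 : U1.rank = k) (hU2 : U2.rank = k)
    (hUne : U1 ≠ U2 → rowSpace U1 ≠ rowSpace U2)
    (hUd : U1 ≠ U2 → d1 ≤ subspaceDist (rowSpace U1) (rowSpace U2))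
    (hQd : Q1 ≠ Q2 → d2 ≤ (Q1 - Q2).rank) (hne : (U1, Q1) ≠ (U2, Q2)) :
    rowSpace (hcat U1 Q1) ≠ rowSpace (hcat U2 Q2) ∧
      min d1 (2 * d2) ≤ subspaceDist (rowSpace (hcat U1 Q1)) (rowSpace (hcat U2 Q2)) := by
  by_cases hU : U1 = U2
  · subst hU
    have hQ : Q1 ≠ Q2 := fun h => hne (h ▸ rfl)
    have hdist := two_mul_rank_sub_le_subspaceDist_rowSpace_hcat hU1 Q1 Q2
    have hrank : (Q1 - Q2).rank ≠ 0 := fun h => hQ (sub_eq_zero.mp (eq_zero_of_rank_eq_zero h))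
    refine ⟨fun h => ?_, ?_⟩
    · rw [h, subspaceDist_self] at hdist
      omega
    · have := hQd hQ
      omega
  · refine ⟨fun h => hUne hU ?_, (min_le_left _ _).trans <| (hUd hU).trans <|
      subspaceDist_rowSpace_le_subspaceDist_rowSpace_hcat hU1 hU2 Q1 Q2⟩
    rw [← rowSpace_hcat_map_castAdd U1 Q1, ← rowSpace_hcat_map_castAdd U2 Q2, h]

end Linkage

theorem linkage_construction_general (k n1 n2 N1 N2 d1 d2 : ℕ)
    (F : Type*) [Field F]
    (𝒰 : Finset (Matrix (Fin k) (Fin n1) F)) (h𝒰 : IsSCRepOfCDC 𝒰 N1 d1)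
    (𝒬 : Finset (Matrix (Fin k) (Fin n2) F)) (h𝒬card : 𝒬.card = N2)
    (h𝒬dist : ∀ A ∈ 𝒬, ∀ B ∈ 𝒬, A ≠ B → d2 ≤ (A - B).rank) :
    (∀ U ∈ 𝒰, ∀ Q ∈ 𝒬, finrank F ↥(rowSpace (hcat U Q)) = k) ∧
    ((@Finset.image _ _ (Classical.decEq _)
      (fun p : Matrix (Fin k) (Fin n1) F × Matrix (Fin k) (Fin n2) F =>
        rowSpace (hcat p.1 p.2)) (𝒰 ×ˢ 𝒬)).card = N1 * N2) ∧
    (∀ U1 ∈ 𝒰, ∀ Q1 ∈ 𝒬, ∀ U2 ∈ 𝒰, ∀ Q2 ∈ 𝒬, (U1, Q1) ≠ (U2, Q2) →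
      rowSpace (hcat U1 Q1) ≠ rowSpace (hcat U2 Q2) ∧
      min d1 (2 * d2) ≤ subspaceDist (rowSpace (hcat U1 Q1)) (rowSpace (hcat U2 Q2))) := by
  obtain ⟨hN1, hrank, hUne, hUd⟩ := h𝒰
  have hpair : ∀ U1 ∈ 𝒰, ∀ Q1 ∈ 𝒬, ∀ U2 ∈ 𝒰, ∀ Q2 ∈ 𝒬, (U1, Q1) ≠ (U2, Q2) →
      rowSpace (hcat U1 Q1) ≠ rowSpace (hcat U2 Q2) ∧
      min d1 (2 * d2) ≤ subspaceDist (rowSpace (hcat U1 Q1)) (rowSpace (hcat U2 Q2)) :=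
    fun U1 hU1 Q1 hQ1 U2 hU2 Q2 hQ2 =>
      rowSpace_hcat_ne_and_min_le_subspaceDist (hrank U1 hU1) (hrank U2 hU2)
        (hUne U1 hU1 U2 hU2) (hUd U1 hU1 U2 hU2) (h𝒬dist Q1 hQ1 Q2 hQ2)
  refine ⟨fun U hU Q _ => finrank_rowSpace_hcat (hrank U hU) Q, ?_, hpair⟩
  rw [Finset.card_image_of_injOn, Finset.card_product, hN1, h𝒬card]
  rintro ⟨U1, Q1⟩ h1 ⟨U2, Q2⟩ h2 heq
  simp only [Finset.coe_product, Set.mem_prod, Finset.mem_coe] at h1 h2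
  by_contra hne
  exact (hpair U1 h1.1 Q1 h1.2 U2 h2.1 Q2 h2.2 hne).1 heq

/-- The linkage construction: from an SC-representation `𝒰` of an `(n1, N1, d1, k)_q` CDC
and a rank-metric code `𝒬 ⊆ F_q^{k×n2}` of size `N2` with minimum rank distance `d2`, the
set `W1 = { rowspace(U | Q) : U ∈ 𝒰, Q ∈ 𝒬 }` is an
`(n1 + n2, N1·N2, min{d1, 2·d2}, k)_q` constant dimension code. -/
theorem linkage_construction (q k n1 n2 N1 N2 d1 d2 : ℕ) (hq : IsPrimePow q)
    (F : Type*) [Field F] [Fintype F] (hcard : Fintype.card F = q)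
    (𝒰 : Finset (Matrix (Fin k) (Fin n1) F)) (h𝒰 : IsSCRepOfCDC 𝒰 N1 d1)
    (𝒬 : Finset (Matrix (Fin k) (Fin n2) F)) (h𝒬card : 𝒬.card = N2)
    (h𝒬dist : ∀ A ∈ 𝒬, ∀ B ∈ 𝒬, A ≠ B → d2 ≤ (A - B).rank) :
    (∀ U ∈ 𝒰, ∀ Q ∈ 𝒬, finrank F ↥(rowSpace (hcat U Q)) = k) ∧
    ((@Finset.image _ _ (Classical.decEq _)
      (fun p : Matrix (Fin k) (Fin n1) F × Matrix (Fin k) (Fin n2) F =>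
        rowSpace (hcat p.1 p.2)) (𝒰 ×ˢ 𝒬)).card = N1 * N2) ∧
    (∀ U1 ∈ 𝒰, ∀ Q1 ∈ 𝒬, ∀ U2 ∈ 𝒰, ∀ Q2 ∈ 𝒬, (U1, Q1) ≠ (U2, Q2) →
      rowSpace (hcat U1 Q1) ≠ rowSpace (hcat U2 Q2) ∧
      min d1 (2 * d2) ≤ subspaceDist (rowSpace (hcat U1 Q1)) (rowSpace (hcat U2 Q2))) :=
  linkage_construction_general k n1 n2 N1 N2 d1 d2 F 𝒰 h𝒰 𝒬 h𝒬card h𝒬dist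
end

section
/- Let F be a field and k, s, n1, n2 positive integers with s ≤ k. Let U11 ∈ F^{k×n1} with rank(U11) = k, U22 ∈ F^{k×n2} with rank(U22) = k, Q21 ∈ F^{k×n1} with rank(Q21) ≤ k − s, and Q12 ∈ F^{k×n2} arbitrary. Then the 2k×(n1+n2) block matrix with first block row (U11 | Q12) and second block row (Q21 | U22) has rank at least k + s. Equivalently, dim( rowspace(U11 | Q12) + rowspace(Q21 | U22) ) ≥ k + s. -/
open Module

/-- Vertical concatenation of two matrices with the same number of columns. -/
def vcat {F : Type*} {k1 k2 n : ℕ} (A : Matrix (Fin k1) (Fin n) F)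
    (B : Matrix (Fin k2) (Fin n) F) : Matrix (Fin (k1 + k2)) (Fin n) F :=
  Matrix.of fun i j => Fin.append (fun i1 => A i1 j) (fun i2 => B i2 j) i

/-! Let `W` be the sum of the two row spaces and `π` the projection onto the first `n1`
coordinates. Then `π W` contains `rowspace U11`, of dimension `k`, while `W ∩ ker π` contains
the vectors `x (Q21 | U22)` with `x Q21 = 0`; these form a space of dimension
`k - rank Q21 ≥ s`, because `x ↦ x U22`, hence `x ↦ x (Q21 | U22)`, is injective.
Rank–nullity for `π` restricted to `W` gives `dim W ≥ k + s`. -/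

open Matrix LinearMap Submodule

section RankNullity

variable {K V V' : Type*} [Field K] [AddCommGroup V] [Module K V] [FiniteDimensional K V]
  [AddCommGroup V'] [Module K V']

theorem Submodule.finrank_map_add_finrank_inf_ker (π : V →ₗ[K] V') (W : Submodule K V) :
    finrank K (W.map π) + finrank K ↥(W ⊓ ker π) = finrank K W := by
  rw [← range_domRestrict, ← (π.domRestrict W).finrank_range_add_finrank_ker, ker_domRestrict,
    ← finrank_map_subtype_eq, map_comap_subtype]

theorem Matrix.finrank_ker_vecMulLinear_add_rank_s7 {m n : Type*} [Fintype m] [Fintype n]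
    (M : Matrix m n K) : finrank K (ker M.vecMulLinear) + M.rank = Fintype.card m := by
  rw [rank_eq_finrank_span_row, ← range_vecMulLinear, add_comm, finrank_range_add_finrank_ker,
    finrank_fintype_fun_eq_card]

theorem Matrix.vecMulLinear_injective_of_rank_eq_card {m n : Type*} [Fintype m] [Fintype n]
    {M : Matrix m n K} (h : M.rank = Fintype.card m) : Function.Injective M.vecMulLinear := by
  have := M.finrank_ker_vecMulLinear_add_rank_s7
  rw [← ker_eq_bot, ← Submodule.finrank_eq_zero]
  omega

end RankNullity

section BlockMatrices

variable {F : Type*} [Field F]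

lemma rank_eq_finrank_rowSpace {k n : ℕ} (M : Matrix (Fin k) (Fin n) F) :
    M.rank = finrank F (rowSpace M) := by
  rw [Matrix.rank_eq_finrank_span_row, rowSpace, range_vecMulLinear]

lemma rowSpace_vcat {k1 k2 n : ℕ} (A : Matrix (Fin k1) (Fin n) F)
    (B : Matrix (Fin k2) (Fin n) F) :
    rowSpace (vcat A B) = rowSpace A ⊔ rowSpace B := by
  simp only [rowSpace, range_vecMulLinear, ← Submodule.span_union]
  congr 1
  ext v
  constructor
  · rintro ⟨i, rfl⟩
    refine Fin.addCases (fun i1 => ?_) (fun i2 => ?_) i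
    · exact Or.inl ⟨i1, by funext j; simp [vcat]⟩
    · exact Or.inr ⟨i2, by funext j; simp [vcat]⟩
  · rintro (⟨i, rfl⟩ | ⟨i, rfl⟩)
    · exact ⟨Fin.castAdd k2 i, by funext j; simp [vcat]⟩
    · exact ⟨Fin.natAdd k1 i, by funext j; simp [vcat]⟩

variable {k n1 n2 : ℕ} (A : Matrix (Fin k) (Fin n1) F) (B : Matrix (Fin k) (Fin n2) F)

lemma funLeft_castAdd_comp_vecMulLinear_hcat :
    funLeft F F (Fin.castAdd n2) ∘ₗ (hcat A B).vecMulLinear = A.vecMulLinear :=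
  LinearMap.ext fun x => funext fun j => by simp [vecMul, dotProduct, hcat]

lemma funLeft_natAdd_comp_vecMulLinear_hcat :
    funLeft F F (Fin.natAdd n1) ∘ₗ (hcat A B).vecMulLinear = B.vecMulLinear :=
  LinearMap.ext fun x => funext fun j => by simp [vecMul, dotProduct, hcat]

lemma map_funLeft_castAdd_rowSpace_hcat :
    (rowSpace (hcat A B)).map (funLeft F F (Fin.castAdd n2)) = rowSpace A := by
  rw [rowSpace, ← range_comp, funLeft_castAdd_comp_vecMulLinear_hcat, rowSpace]

lemma vecMulLinear_hcat_injective_of_right {B : Matrix (Fin k) (Fin n2) F}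
    (hB : Function.Injective B.vecMulLinear) : Function.Injective (hcat A B).vecMulLinear := by
  rw [← funLeft_natAdd_comp_vecMulLinear_hcat A B, coe_comp] at hB
  exact hB.of_comp

lemma map_ker_vecMulLinear_le_rowSpace_hcat_inf_ker :
    (ker A.vecMulLinear).map (hcat A B).vecMulLinear ≤
      rowSpace (hcat A B) ⊓ ker (funLeft F F (Fin.castAdd n2)) := by
  refine le_inf map_le_range ?_
  rw [Submodule.map_le_iff_le_comap, ← ker_comp, funLeft_castAdd_comp_vecMulLinear_hcat]

end BlockMatrices

theorem block_matrix_rank_lower_bound_general (F : Type*) [Field F]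
    (k s n1 n2 : ℕ)
    (hsk : s ≤ k)
    (U11 : Matrix (Fin k) (Fin n1) F) (hU11 : U11.rank = k)
    (U22 : Matrix (Fin k) (Fin n2) F) (hU22 : U22.rank = k)
    (Q21 : Matrix (Fin k) (Fin n1) F) (hQ21 : Q21.rank ≤ k - s)
    (Q12 : Matrix (Fin k) (Fin n2) F) :
    k + s ≤ (vcat (hcat U11 Q12) (hcat Q21 U22)).rank ∧
    k + s ≤ finrank F ↥(rowSpace (hcat U11 Q12) ⊔ rowSpace (hcat Q21 U22)) := by
  set W := rowSpace (hcat U11 Q12) ⊔ rowSpace (hcat Q21 U22)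
  set π := funLeft F F (Fin.castAdd n2 : Fin n1 → Fin (n1 + n2))
  have hmap : k ≤ finrank F (W.map π) := by
    rw [← hU11, rank_eq_finrank_rowSpace, ← map_funLeft_castAdd_rowSpace_hcat U11 Q12]
    exact Submodule.finrank_mono (map_mono le_sup_left)
  have hker : s ≤ finrank F ↥(W ⊓ ker π) := by
    have hinj := vecMulLinear_hcat_injective_of_right Q21
      (vecMulLinear_injective_of_rank_eq_card (by simpa using hU22))
    calc s ≤ finrank F (ker Q21.vecMulLinear) := by
          have := Q21.finrank_ker_vecMulLinear_add_rank_s7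
          simp only [Fintype.card_fin] at this
          omega
      _ = finrank F ((ker Q21.vecMulLinear).map (hcat Q21 U22).vecMulLinear) :=
          (equivMapOfInjective _ hinj _).finrank_eq
      _ ≤ finrank F ↥(W ⊓ ker π) := Submodule.finrank_mono <|
          (map_ker_vecMulLinear_le_rowSpace_hcat_inf_ker Q21 U22).trans
            (inf_le_inf_right _ le_sup_right)
  have hW : k + s ≤ finrank F W :=
    (add_le_add hmap hker).trans_eq (W.finrank_map_add_finrank_inf_ker π)
  exact ⟨by rwa [rank_eq_finrank_rowSpace, rowSpace_vcat], hW⟩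

/-- If `U11` and `U22` have full rank `k`, `rank(Q21) ≤ k − s` with `s ≤ k`, and `Q12` is
arbitrary, then the `2k×(n1+n2)` block matrix with block rows `(U11 | Q12)` and
`(Q21 | U22)` has rank at least `k + s`; equivalently,
`dim(rowspace(U11 | Q12) + rowspace(Q21 | U22)) ≥ k + s`. -/
theorem block_matrix_rank_lower_bound (F : Type*) [Field F]
    (k s n1 n2 : ℕ) (hk : 0 < k) (hs : 0 < s) (hn1 : 0 < n1) (hn2 : 0 < n2)
    (hsk : s ≤ k)
    (U11 : Matrix (Fin k) (Fin n1) F) (hU11 : U11.rank = k)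
    (U22 : Matrix (Fin k) (Fin n2) F) (hU22 : U22.rank = k)
    (Q21 : Matrix (Fin k) (Fin n1) F) (hQ21 : Q21.rank ≤ k - s)
    (Q12 : Matrix (Fin k) (Fin n2) F) :
    k + s ≤ (vcat (hcat U11 Q12) (hcat Q21 U22)).rank ∧
    k + s ≤ finrank F ↥(rowSpace (hcat U11 Q12) ⊔ rowSpace (hcat Q21 U22)) :=
  block_matrix_rank_lower_bound_general F k s n1 n2 hsk U11 hU11 U22 hU22 Q21 hQ21 Q12
end

section
/- If A_2(12, 4, 4) ≥ 19676797, then A_2(17, 4, 4) ≥ 644769570782 = 19676797·2^{15} + 1 + 286685. -/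
open Module

/-- `A_q(n, d, k)`: the maximum size of an `(n, M, d, k)_q` constant dimension code, i.e.
of a set of `k`-dimensional subspaces of `F_q^n` with pairwise subspace distance
at least `d`. -/
noncomputable def maxCDCSize (F : Type*) [Field F] [Fintype F] (n d k : ℕ) : ℕ :=
  sSup {M | ∃ C : Finset (Submodule F (Fin n → F)), C.card = M ∧
    (∀ U ∈ C, finrank F ↥U = k) ∧
    ∀ U ∈ C, ∀ W ∈ C, U ≠ W → d ≤ subspaceDist U W}

set_option linter.unnecessarySimpa false

namespace A2Aux

noncomputable section

abbrev R2 := ZMod 2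
abbrev FF4 := GaloisField 2 2
abbrev GG := GaloisField 2 4
abbrev LL := GaloisField 2 5
abbrev V12 := Fin 12 → R2
abbrev V17 := Fin 17 → R2
abbrev AM := (Fin 6 → FF4) × LL

lemma frFF4 : finrank R2 FF4 = 2 := GaloisField.finrank 2 (by norm_num)
lemma frGG : finrank R2 GG = 4 := GaloisField.finrank 2 (by norm_num)
lemma frLL : finrank R2 LL = 5 := GaloisField.finrank 2 (by norm_num)

def bF : Basis (Fin 2) R2 FF4 := (Module.finBasis R2 FF4).reindex (finCongr frFF4)
def bG : Basis (Fin 4) R2 GG := (Module.finBasis R2 GG).reindex (finCongr frGG)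
def bL : Basis (Fin 5) R2 LL := (Module.finBasis R2 LL).reindex (finCongr frLL)

/-- squaring as an `R2`-linear map -/
def frobLin (K : Type*) [Field K] [Algebra R2 K] [CharP K 2] : K →ₗ[R2] K where
  toFun x := x * x
  map_add' x y := by
    show (x + y) * (x + y) = x * x + y * y
    have : (x + y) * (x + y) = x * x + 2 * (x * y) + y * y := by ring
    rw [this]
    have h2 : (2 : K) = 0 := by
      have := CharP.cast_eq_zero K 2; exact_mod_cast this
    rw [h2]; ring
  map_smul' c x := by
    have hc : c * c = c := by revert c; decide
    show (c • x) * (c • x) = c • (x * x)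
    rw [Algebra.smul_def, Algebra.smul_def]
    rw [show algebraMap R2 K c * x * (algebraMap R2 K c * x)
      = (algebraMap R2 K c * algebraMap R2 K c) * (x * x) by ring, ← map_mul, hc]

def frobL : LL →ₗ[R2] LL := frobLin LL
def frobG : GG →ₗ[R2] GG := frobLin GG

/-- the linearized polynomial map `v ↦ a₀ v + a₁ v² + a₂ v⁴` on `GF(32)` -/
def fpolyL (a : LL × LL × LL) : LL →ₗ[R2] LL :=
  LinearMap.mulLeft R2 a.1 + (LinearMap.mulLeft R2 a.2.1) ∘ₗ frobL
    + (LinearMap.mulLeft R2 a.2.2) ∘ₗ (frobL ∘ₗ frobL)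

lemma fpolyL_apply (a : LL × LL × LL) (v : LL) :
    fpolyL a v = a.1 * v + a.2.1 * (v * v) + a.2.2 * (v * v * (v * v)) := rfl

/-- the map `v ↦ α v + γ v²` on `GF(16)` -/
def gmapG (α γ : GG) : GG →ₗ[R2] GG :=
  LinearMap.mulLeft R2 α + (LinearMap.mulLeft R2 γ) ∘ₗ frobG

lemma gmapG_apply (α γ : GG) (v : GG) : gmapG α γ v = α * v + γ * (v * v) := rfl

/-- card of a finite module bounds finrank -/
lemma finrank_le_of_card_le {M : Type*} [AddCommGroup M] [Module R2 M]
    [Module.Finite R2 M] {k : ℕ} (h : Nat.card M ≤ 2 ^ k) : finrank R2 M ≤ k := by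
  haveI : Finite M := Module.finite_of_finite R2
  haveI : Fintype M := Fintype.ofFinite M
  have hc : Fintype.card M = Fintype.card R2 ^ finrank R2 M := card_eq_pow_finrank
  rw [ZMod.card] at hc
  rw [Nat.card_eq_fintype_card, hc] at h
  exact (Nat.pow_le_pow_iff_right (by norm_num)).mp h

end

end A2Aux
namespace A2Aux
noncomputable section
open Polynomial

/-- nonzero linearized quartic polynomials on `GF(32)` have kernel of dim ≤ 2 -/
lemma ker_fpolyL_le (a : LL × LL × LL) (ha : a ≠ 0) :
    finrank R2 ↥(LinearMap.ker (fpolyL a)) ≤ 2 := by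
  classical
  set q : Polynomial LL := C a.1 + C a.2.1 * X + C a.2.2 * X ^ 3 with hqdef
  have hq : q ≠ 0 := by
    intro h
    apply ha
    have h0 : q.coeff 0 = a.1 := by simp [hqdef, coeff_add, coeff_C, coeff_C_mul, coeff_X_pow]
    have h1 : q.coeff 1 = a.2.1 := by simp [hqdef, coeff_add, coeff_C, coeff_C_mul, coeff_X_pow]
    have h3 : q.coeff 3 = a.2.2 := by simp [hqdef, coeff_add, coeff_C, coeff_C_mul, coeff_X_pow]
    rw [h] at h0 h1 h3
    simp only [coeff_zero] at h0 h1 h3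
    exact Prod.ext h0.symm (Prod.ext h1.symm h3.symm)
  have hdeg : q.natDegree ≤ 3 := by
    apply le_trans (natDegree_add_le _ _)
    simp only [max_le_iff]
    refine ⟨le_trans (natDegree_add_le _ _) ?_, le_trans (natDegree_C_mul_le _ _) (by simp)⟩
    simp only [max_le_iff]
    exact ⟨by simp, le_trans (natDegree_C_mul_le _ _) (by simp)⟩
  have hmem : ∀ v : LL, v ∈ LinearMap.ker (fpolyL a) →
      v ∈ (insert (0 : LL) (q.roots.toFinset) : Finset LL) := by
    intro v hv
    rw [LinearMap.mem_ker, fpolyL_apply] at hv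
    rcases eq_or_ne v 0 with h0 | h0
    · simp [h0]
    · apply Finset.mem_insert_of_mem
      rw [Multiset.mem_toFinset, mem_roots hq]
      have hev : v * q.eval v = 0 := by
        rw [show q.eval v = a.1 + a.2.1 * v + a.2.2 * v ^ 3 by
          simp [hqdef, eval_add, eval_mul, eval_pow]]
        calc v * (a.1 + a.2.1 * v + a.2.2 * v ^ 3)
            = a.1 * v + a.2.1 * (v * v) + a.2.2 * (v * v * (v * v)) := by ring
          _ = 0 := hv
      exact (mul_eq_zero.mp hev).resolve_left h0
  have hcard : Nat.card ↥(LinearMap.ker (fpolyL a)) ≤ 2 ^ 2 := by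
    have hsub : (LinearMap.ker (fpolyL a) : Set LL) ⊆
        ↑(insert (0 : LL) (q.roots.toFinset) : Finset LL) := fun v hv => by
      simpa using hmem v hv
    have e1 : Nat.card ↥(LinearMap.ker (fpolyL a))
        = (LinearMap.ker (fpolyL a) : Set LL).ncard := (Nat.card_coe_set_eq _)
    rw [e1]
    calc (LinearMap.ker (fpolyL a) : Set LL).ncard
        ≤ (↑(insert (0 : LL) (q.roots.toFinset) : Finset LL) : Set LL).ncard :=
          Set.ncard_le_ncard hsub (Set.toFinite _)
      _ = (insert (0 : LL) (q.roots.toFinset) : Finset LL).card := Set.ncard_coe_finset _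
      _ ≤ q.roots.toFinset.card + 1 := Finset.card_insert_le _ _
      _ ≤ Multiset.card q.roots + 1 := by
          have := Multiset.toFinset_card_le q.roots; omega
      _ ≤ 3 + 1 := by have h := Polynomial.card_roots' q; omega
      _ = 2 ^ 2 := by norm_num
  exact finrank_le_of_card_le hcard

/-- `v ↦ αv + γv²` on `GF(16)` has kernel of dim ≤ 1 when `(α,γ) ≠ 0` -/
lemma ker_gmapG_le (α γ : GG) (hn : ¬(α = 0 ∧ γ = 0)) :
    finrank R2 ↥(LinearMap.ker (gmapG α γ)) ≤ 1 := by
  classical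
  rcases eq_or_ne γ 0 with hγ | hγ
  · subst hγ
    have hα : α ≠ 0 := fun h => hn ⟨h, rfl⟩
    have hbot : LinearMap.ker (gmapG α 0) = ⊥ := by
      rw [LinearMap.ker_eq_bot']
      intro v hv
      rw [gmapG_apply] at hv
      simp only [zero_mul, add_zero] at hv
      exact (mul_eq_zero.mp hv).resolve_left hα
    rw [hbot]; simp
  · have hsub : (LinearMap.ker (gmapG α γ) : Set GG) ⊆ {0, γ⁻¹ * α} := by
      intro v hv
      rw [SetLike.mem_coe, LinearMap.mem_ker, gmapG_apply] at hv
      rcases eq_or_ne v 0 with h0 | h0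
      · exact Or.inl h0
      · right
        have h1 : α * v = γ * (v * v) := by
          have := eq_neg_of_add_eq_zero_left hv
          rwa [CharTwo.neg_eq] at this
        have h2 : α = γ * v := by
          have : α * v = (γ * v) * v := by rw [h1]; ring
          exact mul_right_cancel₀ h0 this
        rw [h2]
        field_simp
        exact Set.mem_singleton v
    have hcard : Nat.card ↥(LinearMap.ker (gmapG α γ)) ≤ 2 ^ 1 := by
      have e1 : Nat.card ↥(LinearMap.ker (gmapG α γ))
          = (LinearMap.ker (gmapG α γ) : Set GG).ncard := Nat.card_coe_set_eq _
      rw [e1]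
      calc (LinearMap.ker (gmapG α γ) : Set GG).ncard
          ≤ ({0, γ⁻¹ * α} : Set GG).ncard := Set.ncard_le_ncard hsub (Set.toFinite _)
        _ ≤ 2 ^ 1 := by
            apply le_trans (Set.ncard_insert_le _ _)
            simp [Set.ncard_singleton]
    exact finrank_le_of_card_le hcard
end
end A2Aux
namespace A2Aux
noncomputable section

/-! ### Component maps for the extra words -/

def pair23 : GG →ₗ[R2] (Fin 2 → R2) := LinearMap.pi ![bG.coord 2, bG.coord 3]

def sG2 : GG →ₗ[R2] FF4 := bF.equivFun.symm.toLinearMap ∘ₗ pair23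

lemma sG2_eq_iff {v w : GG} (h : sG2 v = sG2 w) :
    bG.coord 2 v = bG.coord 2 w ∧ bG.coord 3 v = bG.coord 3 w := by
  have h2 : pair23 v = pair23 w := by
    have := bF.equivFun.symm.injective (by exact h)
    exact this
  constructor
  · have := congrFun h2 0
    simpa [pair23, LinearMap.pi_apply] using this
  · have := congrFun h2 1
    simpa [pair23, LinearMap.pi_apply] using this

def coordsθ (a c : GG) : GG →ₗ[R2] (Fin 5 → R2) :=
  LinearMap.pi ![bG.coord 0 ∘ₗ gmapG a c, bG.coord 1 ∘ₗ gmapG a c,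
    bG.coord 2 ∘ₗ gmapG a c, bG.coord 0, bG.coord 1]

def θ5 (a c : GG) : GG →ₗ[R2] LL := bL.equivFun.symm.toLinearMap ∘ₗ coordsθ a c

lemma θ5_eq_iff {a c a' c' : GG} {v w : GG} (h : θ5 a c v = θ5 a' c' w) :
    coordsθ a c v = coordsθ a' c' w :=
  bL.equivFun.symm.injective (by exact h)

def mulVecF (m : Fin 6 → FF4) : FF4 →ₗ[R2] (Fin 6 → FF4) where
  toFun s := s • m
  map_add' s t := add_smul s t m
  map_smul' c s := smul_assoc c s m

def EE (m : Fin 6 → FF4) (a c : GG) : GG →ₗ[R2] AM :=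
  (mulVecF m ∘ₗ sG2).prod (θ5 a c)

/-! ### The 1280 plane directions -/

abbrev Mi := (Fin 5 → FF4) ⊕ (Fin 4 → FF4)

def mVec : Mi → (Fin 6 → FF4)
  | .inl x => Fin.cons 1 x
  | .inr y => Fin.cons 0 (Fin.cons 1 y)

@[simp] lemma mVec_inl_at0 (x : Fin 5 → FF4) : mVec (Sum.inl x) 0 = 1 := rfl
@[simp] lemma mVec_inl_atsucc (x : Fin 5 → FF4) (i : Fin 5) :
    mVec (Sum.inl x) i.succ = x i := by simp [mVec]
@[simp] lemma mVec_inr_at0 (y : Fin 4 → FF4) : mVec (Sum.inr y) 0 = 0 := rfl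
@[simp] lemma mVec_inr_at1 (y : Fin 4 → FF4) : mVec (Sum.inr y) 1 = 1 := by
  have h : (1 : Fin 6) = Fin.succ (0 : Fin 5) := rfl
  rw [mVec, h, Fin.cons_succ, Fin.cons_zero]
@[simp] lemma mVec_inr_atsucc (y : Fin 4 → FF4) (i : Fin 4) :
    mVec (Sum.inr y) i.succ.succ = y i := by
  rw [mVec, Fin.cons_succ, Fin.cons_succ]
@[simp] lemma mVec_inl_at1 (x : Fin 5 → FF4) : mVec (Sum.inl x) 1 = x 0 := by
  have h : (1 : Fin 6) = Fin.succ (0 : Fin 5) := rfl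
  rw [mVec, h, Fin.cons_succ]

lemma mVec_smul_zero {t : Mi} {s : FF4} (h : s • mVec t = 0) : s = 0 := by
  cases t with
  | inl x =>
    have := congrFun h 0
    simpa using this
  | inr y =>
    have := congrFun h 1
    simpa using this

lemma mVec_collin_same {t : Mi} {s s' : FF4} (h : s • mVec t = s' • mVec t) : s = s' := by
  have h' : (s - s') • mVec t = 0 := by rw [sub_smul, h, sub_self]
  exact sub_eq_zero.mp (mVec_smul_zero h')

lemma mVec_collin_diff {t t' : Mi} (hne : t ≠ t') {s s' : FF4}
    (h : s • mVec t = s' • mVec t') : s = 0 ∧ s' = 0 := by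
  cases t with
  | inl x =>
    cases t' with
    | inl x' =>
      have h0 := congrFun h 0
      simp only [Pi.smul_apply, mVec_inl_at0, smul_eq_mul, mul_one] at h0
      subst h0
      by_cases hs : s = 0
      · exact ⟨hs, hs⟩
      · exfalso
        apply hne
        congr 1
        funext i
        have := congrFun h i.succ
        simp only [Pi.smul_apply, mVec_inl_atsucc, smul_eq_mul] at this
        exact mul_left_cancel₀ hs this
    | inr y' =>
      have h0 := congrFun h 0
      simp only [Pi.smul_apply, mVec_inl_at0, mVec_inr_at0, smul_eq_mul,
        mul_one, mul_zero] at h0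
      have h1 := congrFun h 1
      simp only [Pi.smul_apply, mVec_inl_at1, mVec_inr_at1, smul_eq_mul,
        mul_one, h0, zero_mul] at h1
      exact ⟨h0, h1.symm⟩
  | inr y =>
    cases t' with
    | inl x' =>
      have h0 := congrFun h 0
      simp only [Pi.smul_apply, mVec_inl_at0, mVec_inr_at0, smul_eq_mul,
        mul_one, mul_zero] at h0
      have h1 := congrFun h 1
      simp only [Pi.smul_apply, mVec_inl_at1, mVec_inr_at1, smul_eq_mul,
        mul_one, ← h0, zero_mul] at h1
      exact ⟨h1, h0.symm⟩
    | inr y' =>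
      have h1 := congrFun h 1
      simp only [Pi.smul_apply, mVec_inr_at1, smul_eq_mul, mul_one] at h1
      subst h1
      by_cases hs : s = 0
      · exact ⟨hs, hs⟩
      · exfalso
        apply hne
        congr 1
        funext i
        have := congrFun h i.succ.succ
        simp only [Pi.smul_apply, mVec_inr_atsucc, smul_eq_mul] at this
        exact mul_left_cancel₀ hs this

end
end A2Aux
namespace A2Aux
noncomputable section

/-! ### Ambient identifications -/

lemma frF6 : finrank R2 (Fin 6 → FF4) = 12 := by
  rw [Module.finrank_pi_fintype R2]
  simp [frFF4]

lemma frAM : finrank R2 AM = 17 := by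
  rw [Module.finrank_prod, frF6, frLL]

def ψe : V12 ≃ₗ[R2] (Fin 6 → FF4) :=
  LinearEquiv.ofFinrankEq _ _ (by rw [Module.finrank_pi, frF6]; simp)

def Φe : AM ≃ₗ[R2] V17 :=
  LinearEquiv.ofFinrankEq _ _ (by rw [frAM, Module.finrank_pi]; simp)

/-! ### The embedding of a 4-dimensional subspace into GF(32) -/

def extend45 : (Fin 4 → R2) →ₗ[R2] (Fin 5 → R2) :=
  LinearMap.pi (fun j => if h : (j : ℕ) < 4 then LinearMap.proj (⟨j, h⟩ : Fin 4) else 0)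

lemma extend45_inj : Function.Injective extend45 := by
  intro f g h
  funext i
  have := congrFun h ⟨i, by omega⟩
  simpa [extend45, LinearMap.pi_apply, i.isLt] using this

def bU {U : Submodule R2 V12} (hU : finrank R2 ↥U = 4) : Basis (Fin 4) R2 ↥U :=
  (Module.finBasis R2 ↥U).reindex (finCongr hU)

def iU (U : Submodule R2 V12) (hU : finrank R2 ↥U = 4) : ↥U →ₗ[R2] LL :=
  bL.equivFun.symm.toLinearMap ∘ₗ extend45 ∘ₗ (bU hU).equivFun.toLinearMap

lemma iU_inj (U : Submodule R2 V12) (hU : finrank R2 ↥U = 4) :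
    Function.Injective (iU U hU) := by
  intro x y h
  simp only [iU, LinearMap.coe_comp, Function.comp_apply, LinearEquiv.coe_coe] at h
  have h1 := bL.equivFun.symm.injective h
  have h2 := extend45_inj h1
  exact (bU hU).equivFun.injective h2

/-! ### The codewords -/

def graphMap (U : Submodule R2 V12) (hU : finrank R2 ↥U = 4) (a : LL × LL × LL) :
    ↥U →ₗ[R2] AM :=
  (ψe.toLinearMap ∘ₗ U.subtype).prod ((fpolyL a) ∘ₗ iU U hU)

def graphWord (U : Submodule R2 V12) (hU : finrank R2 ↥U = 4) (a : LL × LL × LL) :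
    Submodule R2 V17 :=
  LinearMap.range (Φe.toLinearMap ∘ₗ graphMap U hU a)

def extraWord (m : Mi) (a c : GG) : Submodule R2 V17 :=
  LinearMap.range (Φe.toLinearMap ∘ₗ EE (mVec m) a c)

def SL : Submodule R2 LL := Submodule.span R2 (Set.range (fun i : Fin 4 => bL i.castSucc))

def W0 : Submodule R2 V17 :=
  LinearMap.range (Φe.toLinearMap ∘ₗ (LinearMap.inr R2 (Fin 6 → FF4) LL) ∘ₗ SL.subtype)

/-! ### Injectivity of the word maps and dimensions -/

lemma graphMap_inj (U : Submodule R2 V12) (hU : finrank R2 ↥U = 4) (a : LL × LL × LL) :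
    Function.Injective (Φe.toLinearMap ∘ₗ graphMap U hU a) := by
  intro x y h
  simp only [LinearMap.coe_comp, Function.comp_apply, LinearEquiv.coe_coe] at h
  have h1 := Φe.injective h
  have h2 : (graphMap U hU a x).1 = (graphMap U hU a y).1 := by rw [h1]
  simp only [graphMap, LinearMap.prod_apply, Pi.prod, LinearMap.coe_comp,
    Function.comp_apply, LinearEquiv.coe_coe] at h2
  exact Subtype.ext (ψe.injective h2)

lemma EE_inj (m : Mi) (a c : GG) :
    Function.Injective (Φe.toLinearMap ∘ₗ EE (mVec m) a c) := by
  rw [injective_iff_map_eq_zero]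
  intro v hv
  simp only [LinearMap.coe_comp, Function.comp_apply, LinearEquiv.coe_coe,
    EmbeddingLike.map_eq_zero_iff] at hv
  have h1 : (EE (mVec m) a c v).1 = 0 := by rw [hv]; rfl
  have h2 : (EE (mVec m) a c v).2 = 0 := by rw [hv]; rfl
  simp only [EE, LinearMap.prod_apply, Function.prod, LinearMap.coe_comp, Function.comp_apply] at h1 h2
  -- from h1 : mulVecF (mVec m) (sG2 v) = 0 we get sG2 v = 0
  have hs : sG2 v = 0 := mVec_smul_zero (t := m) (s := sG2 v) h1
  have hc23 := sG2_eq_iff (w := 0) (by rw [hs, map_zero])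
  have hcθ : coordsθ a c v = coordsθ a c 0 := θ5_eq_iff (by rw [h2, map_zero])
  rw [map_zero] at hcθ
  have hc0 : bG.coord 0 v = 0 := by
    have := congrFun hcθ 3; simpa [coordsθ, LinearMap.pi_apply] using this
  have hc1 : bG.coord 1 v = 0 := by
    have := congrFun hcθ 4; simpa [coordsθ, LinearMap.pi_apply] using this
  -- all four coordinates vanish
  have : ∀ i, bG.repr v i = 0 := by
    intro i
    fin_cases i
    · simpa [Basis.coord_apply] using hc0
    · simpa [Basis.coord_apply] using hc1
    · simpa [Basis.coord_apply, map_zero] using hc23.1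
    · simpa [Basis.coord_apply, map_zero] using hc23.2
  have hv0 : bG.repr v = 0 := by ext i; simp [this i]
  simpa using congrArg (fun f => bG.repr.symm f) hv0

lemma finrank_range_of_inj {M N : Type*} [AddCommGroup M] [Module R2 M]
    [AddCommGroup N] [Module R2 N] [Module.Finite R2 M] (f : M →ₗ[R2] N)
    (hf : Function.Injective f) : finrank R2 ↥(LinearMap.range f) = finrank R2 M :=
  (LinearEquiv.ofInjective f hf).symm.finrank_eq

lemma graphWord_finrank (U : Submodule R2 V12) (hU : finrank R2 ↥U = 4) (a : LL × LL × LL) :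
    finrank R2 ↥(graphWord U hU a) = 4 := by
  rw [graphWord, finrank_range_of_inj _ (graphMap_inj U hU a), hU]

lemma extraWord_finrank (m : Mi) (a c : GG) : finrank R2 ↥(extraWord m a c) = 4 := by
  rw [extraWord, finrank_range_of_inj _ (EE_inj m a c), frGG]

lemma W0_finrank : finrank R2 ↥W0 = 4 := by
  have hinj : Function.Injective
      (Φe.toLinearMap ∘ₗ (LinearMap.inr R2 (Fin 6 → FF4) LL) ∘ₗ SL.subtype) := by
    intro x y h
    simp only [LinearMap.coe_comp, Function.comp_apply, LinearEquiv.coe_coe] at h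
    have := Φe.injective h
    have h2 := congrArg Prod.snd this
    simpa using Subtype.ext h2
  rw [W0, finrank_range_of_inj _ hinj]
  -- finrank of SL
  have hli : LinearIndependent R2 (fun i : Fin 4 => bL i.castSucc) :=
    bL.linearIndependent.comp _ (Fin.castSucc_injective 4)
  rw [SL, finrank_span_eq_card hli]
  simp

end
end A2Aux
namespace A2Aux
noncomputable section

/-! ### Auxiliary submodules and dimension bounds -/

def Wsub : Submodule R2 GG := Submodule.span R2 {bG 3}

lemma Wsub_finrank : finrank R2 ↥Wsub = 1 := finrank_span_singleton (bG.ne_zero 3)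

lemma coords_ext {v w : GG} (h : ∀ i, bG.repr v i = bG.repr w i) : v = w := by
  have : bG.repr v = bG.repr w := Finsupp.ext h
  exact bG.repr.injective this

lemma mem_Wsub_of_coords {d : GG} (h0 : bG.repr d 0 = 0) (h1 : bG.repr d 1 = 0)
    (h2 : bG.repr d 2 = 0) : d ∈ Wsub := by
  have hd : d = bG.repr d 3 • bG 3 := by
    conv_lhs => rw [← bG.sum_repr d]
    rw [Fin.sum_univ_four, h0, h1, h2]
    simp
  rw [hd]
  exact Submodule.smul_mem _ _ (Submodule.mem_span_singleton_self _)

lemma finrank_le_of_maps_to {M N : Type*} [AddCommGroup M] [Module R2 M]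
    [AddCommGroup N] [Module R2 N] [FiniteDimensional R2 M] [FiniteDimensional R2 N]
    (f : M →ₗ[R2] N) (p : Submodule R2 M) (q : Submodule R2 N)
    (hpq : ∀ x ∈ p, f x ∈ q) :
    finrank R2 ↥p ≤ finrank R2 ↥q + finrank R2 ↥(LinearMap.ker f) := by
  set δ := f.restrict hpq with hδ
  have hrn := LinearMap.finrank_range_add_finrank_ker δ
  have h1 : finrank R2 ↥(LinearMap.range δ) ≤ finrank R2 ↥q :=
    (LinearMap.range δ).finrank_le
  have h2 : finrank R2 ↥(LinearMap.ker δ) ≤ finrank R2 ↥(LinearMap.ker f) := by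
    have hmem : ∀ x : ↥(LinearMap.ker δ),
        (p.subtype ∘ₗ (LinearMap.ker δ).subtype) x ∈ LinearMap.ker f := by
      intro x
      have hx : δ x.val = 0 := LinearMap.mem_ker.mp x.2
      have h1 := congrArg Subtype.val hx
      have h2 : (δ x.val).val = f x.val.val := rfl
      rw [h2] at h1
      simpa using h1
    set g := LinearMap.codRestrict (LinearMap.ker f)
      (p.subtype ∘ₗ (LinearMap.ker δ).subtype) hmem
    have hginj : Function.Injective g := by
      intro x y hxy
      have := congrArg Subtype.val hxy
      simp only [g, LinearMap.codRestrict_apply, LinearMap.coe_comp, Function.comp_apply,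
        Submodule.coe_subtype] at this
      exact Subtype.ext (Subtype.ext this)
    exact LinearMap.finrank_le_finrank_of_injective hginj
  omega

lemma comap_gmapG_le (α γ : GG) (hn : ¬(α = 0 ∧ γ = 0)) :
    finrank R2 ↥(Submodule.comap (gmapG α γ) Wsub) ≤ 2 := by
  have h := finrank_le_of_maps_to (gmapG α γ) (Submodule.comap (gmapG α γ) Wsub) Wsub
    (fun x hx => hx)
  have h2 := ker_gmapG_le α γ hn
  rw [Wsub_finrank] at h
  omega

lemma finrank_ker_comp_le {M N P : Type*} [AddCommGroup M] [Module R2 M]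
    [AddCommGroup N] [Module R2 N] [AddCommGroup P] [Module R2 P]
    [FiniteDimensional R2 M] [FiniteDimensional R2 N]
    (f : M →ₗ[R2] N) (g : N →ₗ[R2] P) (hf : Function.Injective f) :
    finrank R2 ↥(LinearMap.ker (g ∘ₗ f)) ≤ finrank R2 ↥(LinearMap.ker g) := by
  have hmem : ∀ x : ↥(LinearMap.ker (g ∘ₗ f)),
      (f ∘ₗ (LinearMap.ker (g ∘ₗ f)).subtype) x ∈ LinearMap.ker g := by
    intro x
    have hx := LinearMap.mem_ker.mp x.2
    simp only [LinearMap.coe_comp, Function.comp_apply] at hx ⊢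
    simpa using hx
  set h := LinearMap.codRestrict (LinearMap.ker g)
    (f ∘ₗ (LinearMap.ker (g ∘ₗ f)).subtype) hmem
  have hinj : Function.Injective h := by
    intro x y hxy
    have := congrArg Subtype.val hxy
    simp only [h, LinearMap.codRestrict_apply, LinearMap.coe_comp, Function.comp_apply,
      Submodule.coe_subtype] at this
    exact Subtype.ext (hf this)
  exact LinearMap.finrank_le_finrank_of_injective hinj

lemma ker_graph_le (U : Submodule R2 V12) (hU : finrank R2 ↥U = 4) (a : LL × LL × LL)
    (ha : a ≠ 0) : finrank R2 ↥(LinearMap.ker ((fpolyL a) ∘ₗ iU U hU)) ≤ 2 :=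
  le_trans (finrank_ker_comp_le _ _ (iU_inj U hU)) (ker_fpolyL_le a ha)

/-- the distance criterion -/
lemma dist_ge_4 {V W : Submodule R2 V17} (hV : finrank R2 ↥V = 4) (hW : finrank R2 ↥W = 4)
    (hi : finrank R2 ↥(V ⊓ W) ≤ 2) : 4 ≤ subspaceDist V W := by
  have hs := Submodule.finrank_sup_add_finrank_inf_eq V W
  rw [hV, hW] at hs
  show 4 ≤ finrank R2 ↥(V ⊔ W) - finrank R2 ↥(V ⊓ W)
  omega

end
end A2Aux
namespace A2Aux
noncomputable section

lemma fpolyL_sub (a a' : LL × LL × LL) (x : LL) :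
    fpolyL (a - a') x = fpolyL a x - fpolyL a' x := by
  simp only [fpolyL_apply, Prod.fst_sub, Prod.snd_sub]
  ring

lemma gmapG_sub_apply (a a' c c' v : GG) :
    gmapG (a - a') (c - c') v = gmapG a c v - gmapG a' c' v := by
  simp only [gmapG_apply]
  ring

@[simp] lemma coordsθ_at0 (a c v : GG) : coordsθ a c v 0 = bG.coord 0 (gmapG a c v) := rfl
@[simp] lemma coordsθ_at1 (a c v : GG) : coordsθ a c v 1 = bG.coord 1 (gmapG a c v) := rfl
@[simp] lemma coordsθ_at2 (a c v : GG) : coordsθ a c v 2 = bG.coord 2 (gmapG a c v) := rfl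
@[simp] lemma coordsθ_at3 (a c v : GG) : coordsθ a c v 3 = bG.coord 0 v := rfl
@[simp] lemma coordsθ_at4 (a c v : GG) : coordsθ a c v 4 = bG.coord 1 v := rfl

/-- unpack membership in a graph word -/
lemma graphWord_unpack {U : Submodule R2 V12} {hU : finrank R2 ↥U = 4} {a : LL × LL × LL}
    {x : V17} (hx : x ∈ graphWord U hU a) :
    ∃ u : ↥U, Φe.symm x = graphMap U hU a u := by
  obtain ⟨u, hu⟩ := hx
  exact ⟨u, by rw [← hu]; simp⟩

lemma extraWord_unpack {m : Mi} {a c : GG} {x : V17} (hx : x ∈ extraWord m a c) :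
    ∃ v : GG, Φe.symm x = EE (mVec m) a c v := by
  obtain ⟨v, hv⟩ := hx
  exact ⟨v, by rw [← hv]; simp⟩

lemma W0_unpack {x : V17} (hx : x ∈ W0) :
    ∃ s : ↥SL, Φe.symm x = (0, s.val) := by
  obtain ⟨s, hs⟩ := hx
  exact ⟨s, by rw [← hs]; simp⟩

/-- L-A : two graph words over the same `U` -/
lemma inter_gg_same (U : Submodule R2 V12) (hU : finrank R2 ↥U = 4)
    {a a' : LL × LL × LL} (hne : a ≠ a') :
    finrank R2 ↥(graphWord U hU a ⊓ graphWord U hU a') ≤ 2 := by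
  have hsub : graphWord U hU a ⊓ graphWord U hU a' ≤
      Submodule.map (Φe.toLinearMap ∘ₗ graphMap U hU a)
        (LinearMap.ker ((fpolyL (a - a')) ∘ₗ iU U hU)) := by
    intro x hx
    rw [Submodule.mem_inf] at hx
    obtain ⟨u, hu⟩ := graphWord_unpack hx.1
    obtain ⟨u', hu'⟩ := graphWord_unpack hx.2
    have he : graphMap U hU a u = graphMap U hU a' u' := by rw [← hu, ← hu']
    have hfst : ψe u.val = ψe u'.val := congrArg Prod.fst he
    have huu : u = u' := Subtype.ext (ψe.injective hfst)
    have hsnd : fpolyL a (iU U hU u) = fpolyL a' (iU U hU u) := by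
      have := congrArg Prod.snd he
      rwa [← huu] at this
    have hker : u ∈ LinearMap.ker ((fpolyL (a - a')) ∘ₗ iU U hU) := by
      rw [LinearMap.mem_ker, LinearMap.comp_apply, fpolyL_sub, hsnd, sub_self]
    refine ⟨u, hker, ?_⟩
    have : Φe (graphMap U hU a u) = x := by rw [← hu]; simp
    simpa using this
  refine le_trans (Submodule.finrank_mono hsub) (le_trans (Submodule.finrank_map_le _ _) ?_)
  exact ker_graph_le U hU _ (sub_ne_zero.mpr hne)

/-- L-B : graph words over different `U` -/
lemma inter_gg_diff (U U' : Submodule R2 V12) (hU : finrank R2 ↥U = 4)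
    (hU' : finrank R2 ↥U' = 4) (a a' : LL × LL × LL)
    (hUU : finrank R2 ↥(U ⊓ U') ≤ 2) :
    finrank R2 ↥(graphWord U hU a ⊓ graphWord U' hU' a') ≤ 2 := by
  set p := graphWord U hU a ⊓ graphWord U' hU' a' with hp
  set ξ : V17 →ₗ[R2] V12 :=
    ψe.symm.toLinearMap ∘ₗ LinearMap.fst R2 (Fin 6 → FF4) LL ∘ₗ Φe.symm.toLinearMap with hξ
  have key : ∀ x : V17, x ∈ p → ∃ u : ↥U, Φe.symm x = graphMap U hU a u ∧ ξ x = u.val := by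
    intro x hxm
    rw [hp, Submodule.mem_inf] at hxm
    obtain ⟨u, hu⟩ := graphWord_unpack hxm.1
    refine ⟨u, hu, ?_⟩
    rw [hξ]
    simp only [LinearMap.coe_comp, Function.comp_apply, LinearEquiv.coe_coe, hu]
    exact ψe.symm_apply_apply u.val
  have hmem : ∀ x : ↥p, (ξ ∘ₗ p.subtype) x ∈ U ⊓ U' := by
    intro x
    rw [Submodule.mem_inf]
    obtain ⟨u, _, hxi⟩ := key x.val x.2
    have hx2 : (x : V17) ∈ graphWord U' hU' a' := (Submodule.mem_inf.mp x.2).2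
    obtain ⟨u', hu'⟩ := graphWord_unpack hx2
    constructor
    · simpa [hxi] using u.2
    · have : ξ x.val = u'.val := by
        rw [hξ]
        simp only [LinearMap.coe_comp, Function.comp_apply, LinearEquiv.coe_coe, hu']
        exact ψe.symm_apply_apply u'.val
      simpa [this] using u'.2
  set Θ := LinearMap.codRestrict (U ⊓ U') (ξ ∘ₗ p.subtype) hmem with hΘ
  have hinj : Function.Injective Θ := by
    intro x y hxy
    obtain ⟨u, hux, hxi⟩ := key x.val x.2
    obtain ⟨w, hwy, hyi⟩ := key y.val y.2
    have hval : ξ x.val = ξ y.val := by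
      have := congrArg Subtype.val hxy
      simpa [hΘ] using this
    have huw : u = w := by
      apply Subtype.ext
      rw [← hxi, ← hyi, hval]
    apply Subtype.ext
    have hx : x.val = Φe (graphMap U hU a u) := by
      rw [← hux]; simp
    have hy : y.val = Φe (graphMap U hU a w) := by
      rw [← hwy]; simp
    rw [hx, hy, huw]
  exact le_trans (LinearMap.finrank_le_finrank_of_injective hinj) hUU

end
end A2Aux
namespace A2Aux
noncomputable section

lemma mulVecF_inj (m : Mi) : Function.Injective (mulVecF (mVec m)) := by
  intro s t h
  exact mVec_collin_same h

def Pm (m : Mi) : Submodule R2 (Fin 6 → FF4) := LinearMap.range (mulVecF (mVec m))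

lemma Pm_finrank (m : Mi) : finrank R2 ↥(Pm m) = 2 := by
  rw [Pm, finrank_range_of_inj _ (mulVecF_inj m), frFF4]

/-- L-C : graph word vs extra word -/
lemma inter_graph_extra (U : Submodule R2 V12) (hU : finrank R2 ↥U = 4)
    (a : LL × LL × LL) (m : Mi) (a' c' : GG) :
    finrank R2 ↥(graphWord U hU a ⊓ extraWord m a' c') ≤ 2 := by
  set p := graphWord U hU a ⊓ extraWord m a' c' with hp
  set ξ6 : V17 →ₗ[R2] (Fin 6 → FF4) :=
    LinearMap.fst R2 (Fin 6 → FF4) LL ∘ₗ Φe.symm.toLinearMap with hξ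
  have hmem : ∀ x : ↥p, (ξ6 ∘ₗ p.subtype) x ∈ Pm m := by
    intro x
    have hx2 : (x : V17) ∈ extraWord m a' c' := (Submodule.mem_inf.mp x.2).2
    obtain ⟨v, hv⟩ := extraWord_unpack hx2
    refine ⟨sG2 v, ?_⟩
    simp only [hξ, LinearMap.coe_comp, Function.comp_apply, LinearEquiv.coe_coe,
      Submodule.coe_subtype, hv]
    rfl
  set Θ := LinearMap.codRestrict (Pm m) (ξ6 ∘ₗ p.subtype) hmem with hΘ
  have hinj : Function.Injective Θ := by
    intro x y hxy
    have hval : ξ6 x.val = ξ6 y.val := by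
      have := congrArg Subtype.val hxy
      simpa [hΘ] using this
    have hx1 : (x : V17) ∈ graphWord U hU a := (Submodule.mem_inf.mp x.2).1
    have hy1 : (y : V17) ∈ graphWord U hU a := (Submodule.mem_inf.mp y.2).1
    obtain ⟨u, hu⟩ := graphWord_unpack hx1
    obtain ⟨w, hw⟩ := graphWord_unpack hy1
    have hfx : ξ6 x.val = ψe u.val := by
      simp only [hξ, LinearMap.coe_comp, Function.comp_apply, LinearEquiv.coe_coe, hu]
      rfl
    have hfy : ξ6 y.val = ψe w.val := by
      simp only [hξ, LinearMap.coe_comp, Function.comp_apply, LinearEquiv.coe_coe, hw]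
      rfl
    have huw : u = w := Subtype.ext (ψe.injective (by rw [← hfx, ← hfy, hval]))
    apply Subtype.ext
    have hx : x.val = Φe (graphMap U hU a u) := by rw [← hu]; simp
    have hy : y.val = Φe (graphMap U hU a w) := by rw [← hw]; simp
    rw [hx, hy, huw]
  exact le_trans (LinearMap.finrank_le_finrank_of_injective hinj)
    (le_of_eq (Pm_finrank m))

/-- L-D : graph word vs W0 -/
lemma inter_graph_W0 (U : Submodule R2 V12) (hU : finrank R2 ↥U = 4) (a : LL × LL × LL) :
    finrank R2 ↥(graphWord U hU a ⊓ W0) ≤ 2 := by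
  have hbot : graphWord U hU a ⊓ W0 = ⊥ := by
    rw [eq_bot_iff]
    intro x hx
    rw [Submodule.mem_inf] at hx
    obtain ⟨u, hu⟩ := graphWord_unpack hx.1
    obtain ⟨s, hs⟩ := W0_unpack hx.2
    have hfst : ψe u.val = 0 := congrArg Prod.fst (hu.symm.trans hs)
    have hu0 : u.val = 0 := by
      have h0 : ψe u.val = ψe 0 := by rw [hfst, map_zero]
      exact ψe.injective h0
    have hx0 : Φe.symm x = 0 := by
      rw [hu]
      have : u = 0 := Subtype.ext hu0
      rw [this, map_zero]
    have : x = 0 := by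
      have := congrArg Φe hx0
      simpa using this
    simp [this]
  rw [hbot]
  simp

/-- kernel of sG2 has dimension 2 -/
lemma sG2_surj : Function.Surjective sG2 := by
  intro s
  refine ⟨bF.repr s 0 • bG 2 + bF.repr s 1 • bG 3, ?_⟩
  have hc2 : bG.coord 2 (bF.repr s 0 • bG 2 + bF.repr s 1 • bG 3) = bF.repr s 0 := by
    simp [Basis.coord_apply, Finsupp.single_apply]
  have hc3 : bG.coord 3 (bF.repr s 0 • bG 2 + bF.repr s 1 • bG 3) = bF.repr s 1 := by
    simp [Basis.coord_apply, Finsupp.single_apply]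
  show bF.equivFun.symm (pair23 _) = s
  have hp : pair23 (bF.repr s 0 • bG 2 + bF.repr s 1 • bG 3) =
      ![bF.repr s 0, bF.repr s 1] := by
    funext i
    fin_cases i
    · simpa [pair23, LinearMap.pi_apply] using hc2
    · simpa [pair23, LinearMap.pi_apply] using hc3
  rw [hp, Basis.equivFun_symm_apply, Fin.sum_univ_two]
  simp only [Matrix.cons_val_zero, Matrix.cons_val_one, Matrix.head_cons]
  conv_rhs => rw [← bF.sum_repr s]
  rw [Fin.sum_univ_two]

lemma DG_finrank : finrank R2 ↥(LinearMap.ker sG2) = 2 := by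
  have hrn := LinearMap.finrank_range_add_finrank_ker sG2
  rw [LinearMap.range_eq_top.mpr sG2_surj, finrank_top, frFF4, frGG] at hrn
  omega

/-- L-E : extra word vs W0 -/
lemma inter_extra_W0 (m : Mi) (a c : GG) :
    finrank R2 ↥(extraWord m a c ⊓ W0) ≤ 2 := by
  have hsub : extraWord m a c ⊓ W0 ≤
      Submodule.map (Φe.toLinearMap ∘ₗ EE (mVec m) a c) (LinearMap.ker sG2) := by
    intro x hx
    rw [Submodule.mem_inf] at hx
    obtain ⟨v, hv⟩ := extraWord_unpack hx.1
    obtain ⟨s, hs⟩ := W0_unpack hx.2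
    have hfst : (sG2 v) • mVec m = 0 := congrArg Prod.fst (hv.symm.trans hs)
    have hker : v ∈ LinearMap.ker sG2 := by
      rw [LinearMap.mem_ker]
      exact mVec_smul_zero hfst
    refine ⟨v, hker, ?_⟩
    have : Φe (EE (mVec m) a c v) = x := by rw [← hv]; simp
    simpa using this
  refine le_trans (Submodule.finrank_mono hsub) (le_trans (Submodule.finrank_map_le _ _) ?_)
  exact le_of_eq DG_finrank

end
end A2Aux
namespace A2Aux
noncomputable section

/-- L-F : extra word vs extra word -/
lemma inter_extra_extra {m m' : Mi} {a c a' c' : GG}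
    (hne : ¬(m = m' ∧ a = a' ∧ c = c')) :
    finrank R2 ↥(extraWord m a c ⊓ extraWord m' a' c') ≤ 2 := by
  by_cases hm : m = m'
  · subst hm
    -- same plane, different (a,c)
    have hac : ¬(a - a' = 0 ∧ c - c' = 0) := by
      rintro ⟨h1, h2⟩
      exact hne ⟨rfl, sub_eq_zero.mp h1, sub_eq_zero.mp h2⟩
    have hsub : extraWord m a c ⊓ extraWord m a' c' ≤
        Submodule.map (Φe.toLinearMap ∘ₗ EE (mVec m) a c)
          (Submodule.comap (gmapG (a - a') (c - c')) Wsub) := by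
      intro x hx
      rw [Submodule.mem_inf] at hx
      obtain ⟨v, hv⟩ := extraWord_unpack hx.1
      obtain ⟨v', hv'⟩ := extraWord_unpack hx.2
      have he : EE (mVec m) a c v = EE (mVec m) a' c' v' := by rw [← hv, ← hv']
      have hfst : (sG2 v) • mVec m = (sG2 v') • mVec m := congrArg Prod.fst he
      have hsG : sG2 v = sG2 v' := mVec_collin_same hfst
      have hc23 := sG2_eq_iff hsG
      have hsnd : θ5 a c v = θ5 a' c' v' := congrArg Prod.snd he
      have hcθ := θ5_eq_iff hsnd
      have h3 : bG.coord 0 v = bG.coord 0 v' := by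
        have := congrFun hcθ 3; simpa using this
      have h4 : bG.coord 1 v = bG.coord 1 v' := by
        have := congrFun hcθ 4; simpa using this
      have hvv : v = v' := by
        apply coords_ext
        intro i
        fin_cases i
        · simpa [Basis.coord_apply] using h3
        · simpa [Basis.coord_apply] using h4
        · simpa [Basis.coord_apply] using hc23.1
        · simpa [Basis.coord_apply] using hc23.2
      have h0 : bG.coord 0 (gmapG a c v) = bG.coord 0 (gmapG a' c' v) := by
        have := congrFun hcθ 0; rw [← hvv] at this; simpa using this
      have h1 : bG.coord 1 (gmapG a c v) = bG.coord 1 (gmapG a' c' v) := by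
        have := congrFun hcθ 1; rw [← hvv] at this; simpa using this
      have h2 : bG.coord 2 (gmapG a c v) = bG.coord 2 (gmapG a' c' v) := by
        have := congrFun hcθ 2; rw [← hvv] at this; simpa using this
      have hd : gmapG (a - a') (c - c') v ∈ Wsub := by
        rw [gmapG_sub_apply]
        apply mem_Wsub_of_coords
        · rw [map_sub, Finsupp.sub_apply]
          simp only [Basis.coord_apply] at h0
          rw [h0, sub_self]
        · rw [map_sub, Finsupp.sub_apply]
          simp only [Basis.coord_apply] at h1
          rw [h1, sub_self]
        · rw [map_sub, Finsupp.sub_apply]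
          simp only [Basis.coord_apply] at h2
          rw [h2, sub_self]
      refine ⟨v, hd, ?_⟩
      have : Φe (EE (mVec m) a c v) = x := by rw [← hv]; simp
      simpa using this
    refine le_trans (Submodule.finrank_mono hsub)
      (le_trans (Submodule.finrank_map_le _ _) ?_)
    exact comap_gmapG_le _ _ hac
  · -- different planes
    have hsub : extraWord m a c ⊓ extraWord m' a' c' ≤
        Submodule.map (Φe.toLinearMap ∘ₗ EE (mVec m) a c) (LinearMap.ker sG2) := by
      intro x hx
      rw [Submodule.mem_inf] at hx
      obtain ⟨v, hv⟩ := extraWord_unpack hx.1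
      obtain ⟨v', hv'⟩ := extraWord_unpack hx.2
      have he : EE (mVec m) a c v = EE (mVec m') a' c' v' := by rw [← hv, ← hv']
      have hfst : (sG2 v) • mVec m = (sG2 v') • mVec m' := congrArg Prod.fst he
      have hz := mVec_collin_diff hm hfst
      refine ⟨v, LinearMap.mem_ker.mpr hz.1, ?_⟩
      have : Φe (EE (mVec m) a c v) = x := by rw [← hv]; simp
      simpa using this
    refine le_trans (Submodule.finrank_mono hsub)
      (le_trans (Submodule.finrank_map_le _ _) ?_)
    exact le_of_eq DG_finrank

end
end A2Aux
namespace A2Aux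
noncomputable section

lemma cardLL : Nat.card LL = 32 := by
  haveI : Fintype LL := Fintype.ofFinite LL
  rw [Nat.card_eq_fintype_card, card_eq_pow_finrank (K := R2) (V := LL), ZMod.card, frLL]; norm_num

lemma cardGG : Nat.card GG = 16 := by
  haveI : Fintype GG := Fintype.ofFinite GG
  rw [Nat.card_eq_fintype_card, card_eq_pow_finrank (K := R2) (V := GG), ZMod.card, frGG]; norm_num

lemma cardFF4 : Nat.card FF4 = 4 := by
  haveI : Fintype FF4 := Fintype.ofFinite FF4
  rw [Nat.card_eq_fintype_card, card_eq_pow_finrank (K := R2) (V := FF4), ZMod.card, frFF4]; norm_num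

/-- boundedness of the defining sets of `maxCDCSize` -/
lemma bddAbove_CDC (n d k : ℕ) :
    BddAbove {M | ∃ C : Finset (Submodule (ZMod 2) (Fin n → ZMod 2)), C.card = M ∧
      (∀ U ∈ C, finrank (ZMod 2) ↥U = k) ∧
      ∀ U ∈ C, ∀ W ∈ C, U ≠ W → d ≤ subspaceDist U W} := by
  haveI : Finite (Submodule (ZMod 2) (Fin n → ZMod 2)) :=
    Finite.of_injective (fun p => (p : Set (Fin n → ZMod 2))) SetLike.coe_injective
  haveI := Fintype.ofFinite (Submodule (ZMod 2) (Fin n → ZMod 2))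
  refine ⟨Fintype.card (Submodule (ZMod 2) (Fin n → ZMod 2)), fun M hM => ?_⟩
  obtain ⟨C, hc, -⟩ := hM
  rw [← hc]
  exact Finset.card_le_univ C

lemma nonempty_CDC (n d k : ℕ) :
    Set.Nonempty {M | ∃ C : Finset (Submodule (ZMod 2) (Fin n → ZMod 2)), C.card = M ∧
      (∀ U ∈ C, finrank (ZMod 2) ↥U = k) ∧
      ∀ U ∈ C, ∀ W ∈ C, U ≠ W → d ≤ subspaceDist U W} :=
  ⟨0, ∅, by simp⟩

end
end A2Aux
namespace A2Aux
noncomputable section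

variable (C : Finset (Submodule R2 V12))

abbrev IdxT := (↥C × (LL × LL × LL)) ⊕ ((Mi × (GG × GG)) ⊕ Unit)

def wordOfT (hCdim : ∀ U ∈ C, finrank R2 ↥U = 4) : IdxT C → Submodule R2 V17
  | .inl p => graphWord p.1.val (hCdim p.1.val p.1.2) p.2
  | .inr (.inl q) => extraWord q.1 q.2.1 q.2.2
  | .inr (.inr _) => W0

variable {C}

lemma wordOfT_finrank (hCdim : ∀ U ∈ C, finrank R2 ↥U = 4) (i : IdxT C) :
    finrank R2 ↥(wordOfT C hCdim i) = 4 := by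
  rcases i with ⟨U, aa⟩ | (⟨mm, aa, cc⟩ | u)
  · exact graphWord_finrank _ _ _
  · exact extraWord_finrank _ _ _
  · exact W0_finrank

lemma wordOfT_inf (hCdim : ∀ U ∈ C, finrank R2 ↥U = 4)
    (hCinf : ∀ U ∈ C, ∀ W ∈ C, U ≠ W → finrank R2 ↥(U ⊓ W) ≤ 2)
    (i j : IdxT C) (hij : i ≠ j) :
    finrank R2 ↥(wordOfT C hCdim i ⊓ wordOfT C hCdim j) ≤ 2 := by
  rcases i with ⟨U, aa⟩ | (⟨mm, aa, cc⟩ | u) <;>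
    rcases j with ⟨U', aa'⟩ | (⟨mm', aa', cc'⟩ | u')
  · by_cases hUU : U = U'
    · subst hUU
      have hne : aa ≠ aa' := fun hh => hij (by rw [hh])
      exact inter_gg_same U.val (hCdim U.val U.2) hne
    · have hV : U.val ≠ U'.val := fun hh => hUU (Subtype.ext hh)
      exact inter_gg_diff U.val U'.val _ _ _ _ (hCinf U.val U.2 U'.val U'.2 hV)
  · exact inter_graph_extra U.val _ aa mm' aa' cc'
  · exact inter_graph_W0 U.val _ aa
  · show finrank R2 ↥(extraWord mm aa cc ⊓ graphWord U'.val _ aa') ≤ 2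
    rw [inf_comm]
    exact inter_graph_extra U'.val _ aa' mm aa cc
  · have hne : ¬(mm = mm' ∧ aa = aa' ∧ cc = cc') := by
      rintro ⟨h1, h2, h3⟩
      exact hij (by rw [h1, h2, h3])
    exact inter_extra_extra hne
  · exact inter_extra_W0 mm aa cc
  · show finrank R2 ↥(W0 ⊓ graphWord U'.val _ aa') ≤ 2
    rw [inf_comm]
    exact inter_graph_W0 U'.val _ aa'
  · show finrank R2 ↥(W0 ⊓ extraWord mm' aa' cc') ≤ 2
    rw [inf_comm]
    exact inter_extra_W0 mm' aa' cc'
  · cases u; cases u'; exact absurd rfl hij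

lemma final_card (hCdim : ∀ U ∈ C, finrank R2 ↥U = 4)
    (hCinf : ∀ U ∈ C, ∀ W ∈ C, U ≠ W → finrank R2 ↥(U ⊓ W) ≤ 2) :
    ∃ CB : Finset (Submodule R2 V17),
      CB.card = C.card * 32768 + 327681 ∧
      (∀ U ∈ CB, finrank R2 ↥U = 4) ∧
      ∀ U ∈ CB, ∀ W ∈ CB, U ≠ W → 4 ≤ subspaceDist U W := by
  classical
  haveI : Fintype LL := Fintype.ofFinite _
  haveI : Fintype GG := Fintype.ofFinite _
  haveI : Fintype FF4 := Fintype.ofFinite _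
  have hwinj : Function.Injective (wordOfT C hCdim) := by
    intro i j hij
    by_contra hne
    have h2 := wordOfT_inf hCdim hCinf i j hne
    rw [hij, inf_idem] at h2
    have h4 := wordOfT_finrank hCdim j
    omega
  refine ⟨Finset.image (wordOfT C hCdim) Finset.univ, ?_, ?_, ?_⟩
  · rw [Finset.card_image_of_injective _ hwinj, Finset.card_univ]
    have cL : Fintype.card LL = 32 := by rw [← Nat.card_eq_fintype_card]; exact cardLL
    have cG : Fintype.card GG = 16 := by rw [← Nat.card_eq_fintype_card]; exact cardGG
    have cF : Fintype.card FF4 = 4 := by rw [← Nat.card_eq_fintype_card]; exact cardFF4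
    simp only [Fintype.card_sum, Fintype.card_prod, Fintype.card_coe,
      Fintype.card_unit, Fintype.card_fun, Fintype.card_fin, cL, cG, cF]
    ring
  · intro V hV
    obtain ⟨i, -, rfl⟩ := Finset.mem_image.mp hV
    exact wordOfT_finrank hCdim i
  · intro V hV W hW hVW
    obtain ⟨i, -, rfl⟩ := Finset.mem_image.mp hV
    obtain ⟨j, -, rfl⟩ := Finset.mem_image.mp hW
    have hij : i ≠ j := fun hh => hVW (by rw [hh])
    exact dist_ge_4 (wordOfT_finrank hCdim i) (wordOfT_finrank hCdim j)
      (wordOfT_inf hCdim hCinf i j hij)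

end
end A2Aux

/-- If `A_2(12, 4, 4) ≥ 19676797`, then `A_2(17, 4, 4) ≥ 644769570782 = 19676797·2^{15} + 1 + 286685`. -/
theorem A2_17_4_4_lower_bound (h : 19676797 ≤ maxCDCSize (ZMod 2) 12 4 4) :
    644769570782 ≤ maxCDCSize (ZMod 2) 17 4 4 ∧
    (644769570782 : ℕ) = 19676797 * 2 ^ 15 + 1 + 286685 := by
  classical
  refine ⟨?_, by norm_num⟩
  unfold maxCDCSize at h ⊢
  have hmem12 := Nat.sSup_mem (A2Aux.nonempty_CDC 12 4 4) (A2Aux.bddAbove_CDC 12 4 4)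
  obtain ⟨C, hCcard, hCdim, hCdist⟩ := hmem12
  have hCbig : 19676797 ≤ C.card := by rw [hCcard]; exact h
  have hCinf : ∀ U ∈ C, ∀ W ∈ C, U ≠ W →
      Module.finrank (ZMod 2) ↥(U ⊓ W) ≤ 2 := by
    intro U hu W hw hne
    have hd : 4 ≤ Module.finrank (ZMod 2) ↥(U ⊔ W) - Module.finrank (ZMod 2) ↥(U ⊓ W) :=
      hCdist U hu W hw hne
    have hs := Submodule.finrank_sup_add_finrank_inf_eq U W
    rw [hCdim U hu, hCdim W hw] at hs
    omega
  obtain ⟨CB, hCBcard, hCBdim, hCBdist⟩ := A2Aux.final_card hCdim hCinf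
  have hmem17 : CB.card ∈ {M | ∃ C : Finset (Submodule (ZMod 2) (Fin 17 → ZMod 2)),
      C.card = M ∧ (∀ U ∈ C, Module.finrank (ZMod 2) ↥U = 4) ∧
      ∀ U ∈ C, ∀ W ∈ C, U ≠ W → 4 ≤ subspaceDist U W} :=
    ⟨CB, rfl, hCBdim, hCBdist⟩
  have hle := le_csSup (A2Aux.bddAbove_CDC 17 4 4) hmem17
  have : 644769570782 ≤ CB.card := by
    rw [hCBcard]
    omega
  omega
end
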